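/- For all reals a₋, a₊ ≥ 0 with (a₋ + a₊)/2 ≤ 1 and every p > 0, the function Φ_p satisfies (Φ_p(a₋) + Φ_p(a₊))/2 ≤ Φ_p((a₋ + a₊)/2). -/

import Mathlib

/-!
On `[0, 1]` the graph of `Φ_p` is the point reflection of the graph of the convex function `φ_p`
on `[1, 2]` through `(1, φ_p(1))`, so `Φ_p` is concave there and the inequality is midpoint
concavity when `a₋, a₊ ≤ 1`. If `a₋ ≤ 1 ≤ a₊`, write `t = 2 - a₋ - a₊ ≥ 0`; the inequality becomes
`φ(a₊) + 2 φ(1 + t/2) ≤ 2 φ(1) + φ(a₊ + t)`, which is the sum of midpoint convexity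
`2 φ(1 + t/2) ≤ φ(1) + φ(1 + t)` and the monotonicity of increments
`φ(1 + t) - φ(1) ≤ φ(a₊ + t) - φ(a₊)` of a convex function.
-/

open Real

noncomputable def phi (p x : ℝ) : ℝ := (1 + x) ^ (-p / 2)

noncomputable def Phi (p x : ℝ) : ℝ :=
  if 1 ≤ x then phi p x else 2 * phi p 1 - phi p (2 - x)

open Set

theorem convexOn_rpow_of_nonpos {p : ℝ} (hp : p ≤ 0) :
    ConvexOn ℝ (Ioi 0) fun x : ℝ ↦ x ^ p := by
  refine ⟨convex_Ioi 0, fun x (hx : 0 < x) y (hy : 0 < y) a b ha hb hab ↦ ?_⟩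
  simp only [smul_eq_mul]
  calc (a * x + b * y) ^ p
      ≤ (x ^ a * y ^ b) ^ p := rpow_le_rpow_of_nonpos (by positivity)
        (geom_mean_le_arith_mean2_weighted ha hb hx.le hy.le hab) hp
    _ = (x ^ p) ^ a * (y ^ p) ^ b := by
        rw [mul_rpow (by positivity) (by positivity), ← rpow_mul hx.le, ← rpow_mul hy.le,
          mul_comm a, mul_comm b, rpow_mul hx.le, rpow_mul hy.le]
    _ ≤ a * x ^ p + b * y ^ p :=
        geom_mean_le_arith_mean2_weighted ha hb (by positivity) (by positivity) hab

theorem ConvexOn.map_add_div_two_le {s : Set ℝ} {f : ℝ → ℝ} (hf : ConvexOn ℝ s f) {x y : ℝ}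
    (hx : x ∈ s) (hy : y ∈ s) : f ((x + y) / 2) ≤ (f x + f y) / 2 := by
  have h := hf.2 hx hy (by norm_num : (0 : ℝ) ≤ 1 / 2) (by norm_num : (0 : ℝ) ≤ 1 / 2)
    (by norm_num)
  simp only [smul_eq_mul] at h
  rw [show (x + y) / 2 = 1 / 2 * x + 1 / 2 * y by ring]
  linarith

/-- Both `x + t` and `y` are convex combinations of `x` and `y + t`, with swapped weights. -/
theorem ConvexOn.add_le_add_of_le {s : Set ℝ} {f : ℝ → ℝ} (hf : ConvexOn ℝ s f) {x y t : ℝ}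
    (hx : x ∈ s) (hyt : y + t ∈ s) (hxy : x ≤ y) (ht : 0 ≤ t) :
    f (x + t) + f y ≤ f x + f (y + t) := by
  rcases (add_nonneg (sub_nonneg.2 hxy) ht).eq_or_lt with hd | hd
  · obtain ⟨rfl, rfl⟩ : y = x ∧ t = 0 := ⟨by linarith, by linarith⟩
    simp
  have hsum : (y - x) / (y - x + t) + t / (y - x + t) = 1 := by field_simp
  have hleft := hf.2 hx hyt (div_nonneg (sub_nonneg.2 hxy) hd.le) (div_nonneg ht hd.le) hsum
  have hright := hf.2 hx hyt (div_nonneg ht hd.le) (div_nonneg (sub_nonneg.2 hxy) hd.le)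
    ((add_comm _ _).trans hsum)
  simp only [smul_eq_mul] at hleft hright
  rw [show (y - x) / (y - x + t) * x + t / (y - x + t) * (y + t) = x + t by field_simp; ring]
    at hleft
  rw [show t / (y - x + t) * x + (y - x) / (y - x + t) * (y + t) = y by field_simp; ring]
    at hright
  linear_combination hleft + hright + (f x + f (y + t)) * hsum

theorem convexOn_phi {p : ℝ} (hp : 0 ≤ p) : ConvexOn ℝ (Ioi (-1)) (phi p) := by
  have h := (convexOn_rpow_of_nonpos (p := -p / 2) (by linarith)).translate_right 1
  have hs : (fun z : ℝ ↦ 1 + z) ⁻¹' Ioi 0 = Ioi (-1) := by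
    ext x
    simp only [mem_preimage, mem_Ioi]
    constructor <;> intro <;> linarith
  rwa [hs] at h

theorem Phi_of_one_le (p : ℝ) {x : ℝ} (hx : 1 ≤ x) : Phi p x = phi p x := if_pos hx

theorem Phi_of_le_one (p : ℝ) {x : ℝ} (hx : x ≤ 1) : Phi p x = 2 * phi p 1 - phi p (2 - x) := by
  unfold Phi
  split_ifs with h
  · obtain rfl : x = 1 := le_antisymm hx h
    norm_num
    ring
  · rfl

section

variable {p a b : ℝ}

theorem Phi_average_le_of_le_one (hp : 0 ≤ p) (ha : a ≤ 1) (hb : b ≤ 1) :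
    (Phi p a + Phi p b) / 2 ≤ Phi p ((a + b) / 2) := by
  rw [Phi_of_le_one p ha, Phi_of_le_one p hb, Phi_of_le_one p (by linarith)]
  have hmid := (convexOn_phi hp).map_add_div_two_le (x := 2 - a) (y := 2 - b)
    (by rw [mem_Ioi]; linarith) (by rw [mem_Ioi]; linarith)
  rw [show (2 - a + (2 - b)) / 2 = 2 - (a + b) / 2 by ring] at hmid
  linarith

theorem Phi_average_le_of_le_one_le (hp : 0 ≤ p) (ha : a ≤ 1) (hb : 1 ≤ b)
    (hab : (a + b) / 2 ≤ 1) : (Phi p a + Phi p b) / 2 ≤ Phi p ((a + b) / 2) := by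
  rw [Phi_of_le_one p ha, Phi_of_one_le p hb, Phi_of_le_one p hab]
  have hinc := (convexOn_phi hp).add_le_add_of_le (x := 1) (y := b) (t := 2 - a - b)
    (by rw [mem_Ioi]; norm_num) (by rw [mem_Ioi]; linarith) hb (by linarith)
  rw [show b + (2 - a - b) = 2 - a by ring] at hinc
  have hmid := (convexOn_phi hp).map_add_div_two_le (x := 1) (y := 1 + (2 - a - b))
    (by rw [mem_Ioi]; norm_num) (by rw [mem_Ioi]; linarith)
  rw [show (1 + (1 + (2 - a - b))) / 2 = 2 - (a + b) / 2 by ring] at hmid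
  linarith

end

theorem stmt6_general (p : ℝ) (hp : 0 < p) (aneg apos : ℝ)
    (h : (aneg + apos) / 2 ≤ 1) :
    (Phi p aneg + Phi p apos) / 2 ≤ Phi p ((aneg + apos) / 2) := by
  wlog hle : aneg ≤ apos generalizing aneg apos
  · have := this apos aneg (by linarith) (by linarith)
    rwa [add_comm apos, add_comm (Phi p apos)] at this
  have hneg : aneg ≤ 1 := by linarith
  rcases le_total apos 1 with hpos | hpos
  · exact Phi_average_le_of_le_one hp.le hneg hpos
  · exact Phi_average_le_of_le_one_le hp.le hneg hpos h

theorem stmt6 (p : ℝ) (hp : 0 < p) (aneg apos : ℝ) (hneg : 0 ≤ aneg) (hpos : 0 ≤ apos)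
    (h : (aneg + apos) / 2 ≤ 1) :
    (Phi p aneg + Phi p apos) / 2 ≤ Phi p ((aneg + apos) / 2) :=
  stmt6_general p hp aneg apos h
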